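/- Let M be a maximum matching of graph G and suppose edge e = (u,v) ∈ M is deleted. Then in G − e, with respect to the matching M − e, every augmenting path starts or ends at u or v, and augmenting at most one such path (starting from u and, if still free, from v) yields a maximum matching of G − e. -/

import Mathlib

open Finset

/-- `M` is a matching of `G`: every edge of `M` is an edge of `G` and no two
distinct edges of `M` share an endpoint. -/
def IsMatching {V : Type*} (G : SimpleGraph V) (M : Finset (Sym2 V)) : Prop :=
  (∀ e ∈ M, e ∈ G.edgeSet) ∧ ∀ e ∈ M, ∀ f ∈ M, e ≠ f → ∀ v : V, v ∈ e → v ∉ f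

/-- A vertex is free w.r.t. `M` if it lies on no edge of `M`. -/
def IsFree {V : Type*} (M : Finset (Sym2 V)) (v : V) : Prop := ∀ e ∈ M, v ∉ e

/-- `M` is a maximum-cardinality matching of `G`. -/
def IsMaximumMatching {V : Type*} (G : SimpleGraph V) (M : Finset (Sym2 V)) : Prop :=
  IsMatching G M ∧ ∀ M' : Finset (Sym2 V), IsMatching G M' → M'.card ≤ M.card

/-- `M` is a maximal matching of `G`: it is a matching and every edge of `G`
has at least one matched endpoint. -/
def IsMaximalMatching {V : Type*} (G : SimpleGraph V) (M : Finset (Sym2 V)) : Prop :=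
  IsMatching G M ∧ ∀ e ∈ G.edgeSet, ∃ v : V, v ∈ e ∧ ¬ IsFree M v

/-- `p` is an augmenting path w.r.t. `M`: a simple path of positive length
between two free vertices whose edges alternate, starting (and hence, since the
endpoints are free, also ending) with a non-matching edge. -/
def IsAugPath {V : Type*} (G : SimpleGraph V) (M : Finset (Sym2 V)) {a b : V}
    (p : G.Walk a b) : Prop :=
  p.IsPath ∧ 0 < p.length ∧ IsFree M a ∧ IsFree M b ∧
    ∀ (i : ℕ) (h : i < p.edges.length), p.edges.get ⟨i, h⟩ ∈ M ↔ Odd i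

/-!
Deleting the matched edge `uv` frees only `u` and `v`, so an augmenting path for `M - uv` in
`G - uv` with neither end at `u` or `v` would augment `M` in `G`, contradicting maximality.
Augmenting `M - uv` restores `|M|` edges, the most any matching of `G - uv ≤ G` can have.
When no augmenting path exists, `M - uv` is maximum by Berge's theorem, which follows by
induction on the smaller matching `A`: take a vertex `a` free for `A` on an edge `aw` of the
larger matching `B`. If `w` is free for `A` too, `aw` augments `A`. Otherwise `w` is matched
to `z` by `A`; the induction hypothesis for `A - wz` and `B - aw` gives an augmenting path
avoiding `a` and `w`, which either augments `A` as well or, after reversal, ends at `z` and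
extends by `z w a`.
-/

open SimpleGraph Walk

theorem List.countP_mem_eq_length_div_two {α : Type*} [DecidableEq α] {N : Finset α} :
    ∀ {l : List α}, (∀ i (h : i < l.length), l[i] ∈ N ↔ Odd i) →
      l.countP (· ∈ N) = l.length / 2
  | [], _ => by simp
  | [e], h => by simpa using h 0
  | e :: f :: l, h => by
    have he : e ∉ N := by simpa using h 0
    have hf : f ∈ N := by simpa using h 1
    have hl : l.countP (· ∈ N) = l.length / 2 :=
      countP_mem_eq_length_div_two fun i hi => by
        have := h (i + 2) (by simp only [length_cons]; omega)
        rwa [getElem_cons_succ, getElem_cons_succ, Nat.odd_add_one, Nat.odd_add_one,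
          not_not] at this
    simp only [countP_cons_of_neg, countP_cons_of_pos, he, hf, hl, decide_false, decide_true,
      Bool.false_eq_true, not_false_eq_true, length_cons]
    omega

section

variable {V : Type*} {H : SimpleGraph V} {N : Finset (Sym2 V)}

lemma IsFree.anti {N' : Finset (Sym2 V)} {x : V} (hx : IsFree N x) (h : N' ⊆ N) :
    IsFree N' x :=
  fun e he => hx e (h he)

lemma IsFree.of_isFree_erase [DecidableEq V] {x y z : V} (hx : IsFree (N.erase s(y, z)) x)
    (hy : x ≠ y) (hz : x ≠ z) : IsFree N x := by
  intro e he hxe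
  obtain rfl | hne := eq_or_ne e s(y, z)
  · simp [hy, hz] at hxe
  · exact hx e (mem_erase.mpr ⟨hne, he⟩) hxe

lemma IsMatching.eq_of_mem_of_mem (hN : IsMatching H N) {e f : Sym2 V} (he : e ∈ N)
    (hf : f ∈ N) {t : V} (hte : t ∈ e) (htf : t ∈ f) : e = f := by
  by_contra hef
  exact hN.2 e he f hf hef t hte htf

lemma IsMatching.isFree_erase [DecidableEq V] (hN : IsMatching H N) {e : Sym2 V} (he : e ∈ N)
    {x : V} (hx : x ∈ e) : IsFree (N.erase e) x :=
  fun _ hf hxf => ne_of_mem_erase hf (hN.eq_of_mem_of_mem he (mem_of_mem_erase hf) hx hxf).symm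

lemma IsMatching.subset {N' : Finset (Sym2 V)} (hN : IsMatching H N) (h : N' ⊆ N) :
    IsMatching H N' :=
  ⟨fun e he => hN.1 e (h he), fun e he f hf => hN.2 e (h he) f (h hf)⟩

lemma IsMatching.mono {H' : SimpleGraph V} (hN : IsMatching H N) (h : H ≤ H') :
    IsMatching H' N :=
  ⟨fun e he => edgeSet_mono h (hN.1 e he), hN.2⟩

lemma IsMatching.deleteEdges_erase [DecidableEq V] (hN : IsMatching H N) (e : Sym2 V) :
    IsMatching (H.deleteEdges {e}) (N.erase e) := by
  refine ⟨fun f hf => ?_, (hN.subset (erase_subset e N)).2⟩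
  rw [edgeSet_deleteEdges]
  exact ⟨hN.1 f (mem_of_mem_erase hf), ne_of_mem_erase hf⟩

lemma IsMatching.card_biUnion_toFinset [DecidableEq V] (hN : IsMatching H N) :
    (N.biUnion Sym2.toFinset).card = 2 * N.card := by
  rw [card_biUnion, sum_congr rfl fun e he =>
    Sym2.card_toFinset_of_not_isDiag e (H.not_isDiag_of_mem_edgeSet (hN.1 e he)), sum_const,
    smul_eq_mul, mul_comm]
  intro e he f hf hef
  exact disjoint_left.mpr fun x hxe hxf =>
    hN.2 e he f hf hef x (Sym2.mem_toFinset.mp hxe) (Sym2.mem_toFinset.mp hxf)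

lemma IsMatching.exists_isFree_of_card_lt {A B : Finset (Sym2 V)} (hA : IsMatching H A)
    (hB : IsMatching H B) (hlt : A.card < B.card) : ∃ a w, s(a, w) ∈ B ∧ IsFree A a := by
  classical
  obtain ⟨a, haB, haA⟩ := exists_mem_notMem_of_card_lt_card
    (s := A.biUnion Sym2.toFinset) (t := B.biUnion Sym2.toFinset)
    (by rw [hA.card_biUnion_toFinset, hB.card_biUnion_toFinset]; omega)
  obtain ⟨_, hf, haf⟩ := mem_biUnion.mp haB
  obtain ⟨w, rfl⟩ := Sym2.mem_iff_exists.mp (Sym2.mem_toFinset.mp haf)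
  exact ⟨a, w, hf, fun e he hae => haA (mem_biUnion.mpr ⟨e, he, Sym2.mem_toFinset.mpr hae⟩)⟩

lemma SimpleGraph.Walk.IsPath.eq_or_eq_add_one_of_getVert_mem {u v : V} {p : H.Walk u v}
    (hp : p.IsPath) {i k : ℕ} (hi : i < p.edges.length) (hk : k ≤ p.length)
    (h : p.getVert k ∈ p.edges[i]) :
    k = i ∨ k = i + 1 := by
  have hi' : i < p.length := p.length_edges ▸ hi
  rw [getElem_edges, Sym2.mem_iff] at h
  rcases h with h | h
  · exact .inl (hp.getVert_injOn hk hi'.le h)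
  · exact .inr (hp.getVert_injOn hk hi' h)

namespace IsAugPath

variable {a b : V} {p : H.Walk a b}

lemma getElem_edges_mem_iff (hp : IsAugPath H N p) {i : ℕ} (hi : i < p.edges.length) :
    p.edges[i] ∈ N ↔ Odd i :=
  hp.2.2.2.2 i hi

lemma odd_length (hp : IsAugPath H N p) : Odd p.length := by
  have hlen := hp.2.1
  have hlast : p.length - 1 < p.edges.length := by rw [p.length_edges]; omega
  have hnotin : p.edges[p.length - 1] ∉ N := by
    refine fun hN => hp.2.2.2.1 _ hN ?_
    rw [getElem_edges, Nat.sub_add_cancel hlen, getVert_length]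
    exact Sym2.mem_mk_right _ _
  have := (hp.getElem_edges_mem_iff hlast).not.mp hnotin
  rw [Nat.not_odd_iff_even] at this
  exact (Nat.sub_add_cancel hlen) ▸ this.add_one

lemma ne (hp : IsAugPath H N p) : a ≠ b := by
  rintro rfl
  exact not_nil_iff_lt_length.mpr hp.2.1 (isPath_iff_nil.mp hp.1)

lemma reverse (hp : IsAugPath H N p) : IsAugPath H N p.reverse := by
  refine ⟨hp.1.reverse, by simpa using hp.2.1, hp.2.2.2.1, hp.2.2.1, fun i hi => ?_⟩
  have hlen := p.length_edges
  have hodd := hp.odd_length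
  simp only [List.get_eq_getElem, edges_reverse, List.getElem_reverse]
  simp only [edges_reverse, List.length_reverse] at hi
  rw [hp.getElem_edges_mem_iff (i := p.edges.length - 1 - i) (by omega)]
  obtain ⟨m, hm⟩ := hodd
  rw [hlen, hm, show 2 * m + 1 - 1 - i = 2 * m - i by omega, Nat.odd_sub (by omega)]
  simp [← Nat.not_even_iff_odd]

lemma mapLe (hp : IsAugPath H N p) {H' : SimpleGraph V} (h : H ≤ H') :
    IsAugPath H' N (p.mapLe h) := by
  refine ⟨(isPath_mapLe h).mpr hp.1, by simpa using hp.2.1, hp.2.2.1, hp.2.2.2.1,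
    fun i hi => ?_⟩
  simp only [List.get_eq_getElem, edges_mapLe_eq_edges] at hi ⊢
  exact hp.getElem_edges_mem_iff hi

lemma of_iff_on_edges (hp : IsAugPath H N p) {N' : Finset (Sym2 V)}
    (hN : ∀ e ∈ p.edges, e ∈ N ↔ e ∈ N') (ha : IsFree N' a) (hb : IsFree N' b) :
    IsAugPath H N' p :=
  ⟨hp.1, hp.2.1, ha, hb, fun i hi => (hN _ (List.get_mem _ _)).symm.trans (hp.2.2.2.2 i hi)⟩

lemma mem_edges_of_mem_support (hN : IsMatching H N) (hp : IsAugPath H N p) {e : Sym2 V}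
    (he : e ∈ N) {t : V} (hte : t ∈ e) (ht : t ∈ p.support) : e ∈ p.edges := by
  obtain ⟨k, rfl, hk⟩ := mem_support_iff_exists_getVert.mp ht
  have hk0 : k ≠ 0 := by
    rintro rfl
    exact hp.2.2.1 e he (by simpa using hte)
  have hkl : k ≠ p.length := by
    rintro rfl
    exact hp.2.2.2.1 e he (by simpa using hte)
  have hlen := p.length_edges
  rcases Nat.even_or_odd k with hke | hko
  · have hi : k - 1 < p.edges.length := by omega
    have hmem : p.edges[k - 1] ∈ N :=
      (hp.getElem_edges_mem_iff hi).mpr (Nat.Even.sub_odd (by omega) hke odd_one)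
    have hkv : p.getVert k ∈ p.edges[k - 1] := by
      rw [getElem_edges, Nat.sub_add_cancel (by omega)]
      exact Sym2.mem_mk_right _ _
    exact hN.eq_of_mem_of_mem he hmem hte hkv ▸ List.getElem_mem hi
  · have hi : k < p.edges.length := by omega
    have hmem : p.edges[k] ∈ N := (hp.getElem_edges_mem_iff hi).mpr hko
    have hkv : p.getVert k ∈ p.edges[k] := by
      rw [getElem_edges]
      exact Sym2.mem_mk_left _ _
    exact hN.eq_of_mem_of_mem he hmem hte hkv ▸ List.getElem_mem hi

lemma eq_of_notMem_of_notMem (hp : IsAugPath H N p) {e f : Sym2 V} (he : e ∈ p.edges)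
    (hf : f ∈ p.edges) (heN : e ∉ N) (hfN : f ∉ N) {t : V} (hte : t ∈ e) (htf : t ∈ f) :
    e = f := by
  obtain ⟨i, hi, rfl⟩ := List.mem_iff_getElem.mp he
  obtain ⟨j, hj, rfl⟩ := List.mem_iff_getElem.mp hf
  have hie : ¬ Odd i := (hp.getElem_edges_mem_iff hi).not.mp heN
  have hje : ¬ Odd j := (hp.getElem_edges_mem_iff hj).not.mp hfN
  have hlen := p.length_edges
  have hti : ∃ k, t = p.getVert k ∧ (k = i ∨ k = i + 1) := by
    rw [getElem_edges, Sym2.mem_iff] at hte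
    rcases hte with rfl | rfl
    exacts [⟨i, rfl, .inl rfl⟩, ⟨i + 1, rfl, .inr rfl⟩]
  obtain ⟨k, rfl, hk⟩ := hti
  have hkj := hp.1.eq_or_eq_add_one_of_getVert_mem hj (by omega) htf
  rw [Nat.not_odd_iff_even, Nat.even_iff] at hie hje
  obtain rfl : i = j := by omega
  rfl

lemma isMatching_symmDiff [DecidableEq V] (hN : IsMatching H N) (hp : IsAugPath H N p) :
    IsMatching H (symmDiff N p.edges.toFinset) := by
  have hmix : ∀ e f, e ∈ N → e ∉ p.edges → f ∈ p.edges → ∀ t ∈ e, t ∉ f :=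
    fun e f he hep hf t hte htf => hep (hp.mem_edges_of_mem_support hN he hte
      (p.mem_support_iff_exists_mem_edges.mpr (.inr ⟨f, hf, htf⟩)))
  refine ⟨fun e he => ?_, fun e he f hf hef t hte htf => ?_⟩
  · rcases mem_symmDiff.mp he with ⟨heN, -⟩ | ⟨hep, -⟩
    exacts [hN.1 e heN, p.edges_subset_edgeSet (List.mem_toFinset.mp hep)]
  simp only [mem_symmDiff, List.mem_toFinset] at he hf
  rcases he with ⟨heN, hep⟩ | ⟨hep, heN⟩ <;> rcases hf with ⟨hfN, hfp⟩ | ⟨hfp, hfN⟩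
  · exact hN.2 e heN f hfN hef t hte htf
  · exact hmix e f heN hep hfp t hte htf
  · exact hmix f e hfN hfp hep t htf hte
  · exact hef (hp.eq_of_notMem_of_notMem hep hfp heN hfN hte htf)

lemma card_symmDiff [DecidableEq V] (hp : IsAugPath H N p) :
    (symmDiff N p.edges.toFinset).card = N.card + 1 := by
  have hnodup := hp.1.isTrail.edges_nodup
  have hcount : (p.edges.toFinset ∩ N).card = p.length / 2 := by
    have : p.edges.toFinset ∩ N = (p.edges.filter (· ∈ N)).toFinset := by ext; simp
    rw [this, List.toFinset_card_of_nodup (hnodup.filter _), ← List.countP_eq_length_filter,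
      List.countP_mem_eq_length_div_two hp.2.2.2.2, p.length_edges]
  have hP : p.edges.toFinset.card = p.length := by
    rw [List.toFinset_card_of_nodup hnodup, p.length_edges]
  obtain ⟨m, hm⟩ := hp.odd_length
  have h1 := card_sdiff_add_card_inter N p.edges.toFinset
  have h2 := card_sdiff_add_card_inter p.edges.toFinset N
  rw [inter_comm] at h1
  rw [symmDiff_def, sup_eq_union, card_union_of_disjoint disjoint_sdiff_sdiff]
  omega

lemma concat_concat [DecidableEq V] {x z w a : V} {p : H.Walk x z}
    (hp : IsAugPath H (N.erase s(w, z)) p) (hzw : H.Adj z w) (hwa : H.Adj w a)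
    (hN : s(w, z) ∈ N) (ha : IsFree N a) (hw : w ∉ p.support) (hap : a ∉ p.support) :
    IsAugPath H N ((p.concat hzw).concat hwa) := by
  have hx : IsFree N x := hp.2.2.1.of_isFree_erase (fun h => hw (h ▸ p.start_mem_support)) hp.ne
  have hwz : s(w, z) ∉ p.edges := fun h => hw (p.fst_mem_support_of_mem_edges h)
  have hpath : ((p.concat hzw).concat hwa).IsPath :=
    (hp.1.concat hw hzw).concat (by simp [hap, hwa.ne.symm]) hwa
  refine ⟨hpath, by simp, hx, ha, fun i hi => ?_⟩
  obtain ⟨m, hm⟩ := hp.odd_length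
  have hlen := p.length_edges
  simp only [List.get_eq_getElem, edges_concat, List.concat_eq_append] at hi ⊢
  simp only [List.length_append, List.length_singleton] at hi
  rcases lt_trichotomy i p.length with hlt | rfl | hgt
  · rw [List.getElem_append_left (by rw [List.length_append]; omega),
      List.getElem_append_left (by omega),
      ← hp.getElem_edges_mem_iff, mem_erase, and_iff_right]
    exact fun h => hwz (h ▸ List.getElem_mem _)
  · rw [List.getElem_append_left (by simp), List.getElem_append_right (by omega)]
    simpa [hm, Sym2.eq_swap (a := z)] using hN
  · obtain rfl : i = p.length + 1 := by omega
    rw [List.getElem_append_right (by simp)]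
    simp only [List.length_append, List.length_singleton, hlen, Nat.sub_self,
      List.getElem_cons_zero]
    simpa [hm, parity_simps] using fun h => ha _ h (Sym2.mem_mk_right w a)

end IsAugPath

lemma SimpleGraph.Adj.isAugPath_toWalk {a b : V} (h : H.Adj a b) (ha : IsFree N a)
    (hb : IsFree N b) : IsAugPath H N h.toWalk := by
  refine ⟨by simp [h.ne], by simp, ha, hb, fun i hi => ?_⟩
  obtain rfl : i = 0 := by simpa using hi
  simpa using fun h => ha _ h (Sym2.mem_mk_left a b)

lemma exists_isAugPath_of_isAugPath_erase [DecidableEq V] {A B : Finset (Sym2 V)}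
    (hA : IsMatching H A) (hB : IsMatching H B) {a w z x y : V} (haw : s(a, w) ∈ B)
    (ha : IsFree A a) (hwz : s(w, z) ∈ A) {p : H.Walk x y} (hp : IsAugPath H (A.erase s(w, z)) p)
    (hpAB : ∀ e ∈ p.edges, e ∈ A.erase s(w, z) ∨ e ∈ B.erase s(a, w)) (hxz : x ≠ z) :
    ∃ (x y : V) (p : H.Walk x y), IsAugPath H A p ∧ ∀ e ∈ p.edges, e ∈ A ∨ e ∈ B := by
  have hpAB' : ∀ e ∈ p.edges, e ∈ A ∨ e ∈ B :=
    fun e he => (hpAB e he).imp mem_of_mem_erase mem_of_mem_erase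
  have hout : ∀ t, IsFree (A.erase s(w, z)) t → IsFree (B.erase s(a, w)) t →
      t ∉ p.support := by
    intro t htA htB ht
    obtain ⟨g, hg, htg⟩ :=
      (mem_support_iff_exists_mem_edges_of_not_nil (not_nil_iff_lt_length.mpr hp.2.1)).mp ht
    rcases hpAB g hg with hgA | hgB
    exacts [htA g hgA htg, htB g hgB htg]
  have hap : a ∉ p.support :=
    hout a (ha.anti (erase_subset _ _)) (hB.isFree_erase haw (Sym2.mem_mk_left a w))
  have hwp : w ∉ p.support :=
    hout w (hA.isFree_erase hwz (Sym2.mem_mk_left w z))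
      (hB.isFree_erase haw (Sym2.mem_mk_right a w))
  by_cases hyz : y = z
  · subst hyz
    refine ⟨x, a, (p.concat (hA.1 _ hwz).symm).concat (hB.1 _ haw).symm,
      hp.concat_concat _ _ hwz ha hwp hap, fun e he => ?_⟩
    simp only [edges_concat, List.concat_eq_append, List.mem_append, List.mem_singleton] at he
    rcases he with (he | rfl) | rfl
    exacts [hpAB' e he, .inl (Sym2.eq_swap ▸ hwz), .inr (Sym2.eq_swap ▸ haw)]
  · have hA'A : ∀ e ∈ p.edges, e ∈ A.erase s(w, z) ↔ e ∈ A := fun e he =>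
      ⟨mem_of_mem_erase, fun h => mem_erase.mpr
        ⟨fun hew => hwp (p.fst_mem_support_of_mem_edges (hew ▸ he)), h⟩⟩
    have hfree : ∀ t ∈ p.support, t ≠ z → IsFree (A.erase s(w, z)) t → IsFree A t :=
      fun t ht htz htA => htA.of_isFree_erase (fun htw => hwp (htw ▸ ht)) htz
    exact ⟨x, y, p, hp.of_iff_on_edges hA'A (hfree x p.start_mem_support hxz hp.2.2.1)
      (hfree y p.end_mem_support hyz hp.2.2.2.1), hpAB'⟩

theorem IsMatching.exists_isAugPath_of_card_lt {A B : Finset (Sym2 V)} (hA : IsMatching H A)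
    (hB : IsMatching H B) (hlt : A.card < B.card) :
    ∃ (x y : V) (p : H.Walk x y), IsAugPath H A p ∧ ∀ e ∈ p.edges, e ∈ A ∨ e ∈ B := by
  classical
  induction A using Finset.strongInduction generalizing B with
  | H A ih =>
  obtain ⟨a, w, haw, ha⟩ := hA.exists_isFree_of_card_lt hB hlt
  have hadj : H.Adj a w := hB.1 _ haw
  by_cases hw : IsFree A w
  · exact ⟨a, w, hadj.toWalk, hadj.isAugPath_toWalk ha hw, by simp [haw]⟩
  obtain ⟨e, he, hwe⟩ : ∃ e ∈ A, w ∈ e := by simpa [IsFree] using hw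
  obtain ⟨z, rfl⟩ := Sym2.mem_iff_exists.mp hwe
  have hlt' : (A.erase s(w, z)).card < (B.erase s(a, w)).card := by
    rw [card_erase_of_mem he, card_erase_of_mem haw]
    have := card_pos.mpr ⟨_, he⟩
    omega
  obtain ⟨x, y, p, hp, hpAB⟩ := ih _ (erase_ssubset he) (hA.subset (erase_subset _ _))
    (hB.subset (erase_subset _ _)) hlt'
  by_cases hxz : x = z
  · exact exists_isAugPath_of_isAugPath_erase hA hB haw ha he hp.reverse
      (by simpa only [edges_reverse, List.mem_reverse] using hpAB) (hxz ▸ hp.ne.symm)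
  · exact exists_isAugPath_of_isAugPath_erase hA hB haw ha he hp hpAB hxz

theorem IsMatching.isMaximumMatching_of_forall_not_isAugPath (hN : IsMatching H N)
    (h : ∀ (a b : V) (p : H.Walk a b), ¬ IsAugPath H N p) :
    IsMaximumMatching H N := by
  refine ⟨hN, fun N' hN' => not_lt.mp fun hlt => ?_⟩
  obtain ⟨a, b, p, hp, -⟩ := hN.exists_isAugPath_of_card_lt hN' hlt
  exact h a b p hp

theorem IsMaximumMatching.not_isAugPath (hN : IsMaximumMatching H N)
    {a b : V} (p : H.Walk a b) : ¬ IsAugPath H N p := by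
  classical
  intro hp
  have := hN.2 _ (hp.isMatching_symmDiff hN.1)
  rw [hp.card_symmDiff] at this
  omega

lemma IsAugPath.mapLe_deleteEdges_erase [DecidableEq V] {u v a b : V}
    {p : (H.deleteEdges {s(u, v)}).Walk a b} (hp : IsAugPath _ (N.erase s(u, v)) p)
    (hau : a ≠ u) (hav : a ≠ v) (hbu : b ≠ u) (hbv : b ≠ v) :
    IsAugPath H N (p.mapLe (H.deleteEdges_le _)) := by
  refine (hp.mapLe _).of_iff_on_edges (fun e he => ?_) (hp.2.2.1.of_isFree_erase hau hav)
    (hp.2.2.2.1.of_isFree_erase hbu hbv)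
  rw [edges_mapLe_eq_edges] at he
  have := p.edges_subset_edgeSet he
  rw [edgeSet_deleteEdges] at this
  exact mem_erase.trans (and_iff_right this.2)

end

/-- Edge deletion from a maximum matching: after deleting the matched edge
`(u,v)`, every augmenting path w.r.t. `M - e` in `G - e` starts or ends at
`u` or `v`; if there is no augmenting path then `M - e` is already maximum,
and augmenting along any augmenting path yields a maximum matching of `G - e`. -/
theorem delete_matched_edge_aug_path {V : Type*} [DecidableEq V]
    (G : SimpleGraph V) (M : Finset (Sym2 V)) (u v : V)
    (hM : IsMaximumMatching G M) (he : s(u, v) ∈ M)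
    (G' : SimpleGraph V) (hG' : G' = G.deleteEdges {s(u, v)})
    (M' : Finset (Sym2 V)) (hM' : M' = M.erase s(u, v)) :
    (∀ (a b : V) (p : G'.Walk a b), IsAugPath G' M' p →
        a = u ∨ a = v ∨ b = u ∨ b = v) ∧
    ((¬ ∃ (a b : V) (p : G'.Walk a b), IsAugPath G' M' p) →
        IsMaximumMatching G' M') ∧
    (∀ (a b : V) (p : G'.Walk a b), IsAugPath G' M' p →
        IsMaximumMatching G' (symmDiff M' p.edges.toFinset)) := by
  subst hG' hM'
  have hM' := hM.1.deleteEdges_erase s(u, v)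
  refine ⟨fun a b p hp => ?_, fun h => hM'.isMaximumMatching_of_forall_not_isAugPath
    fun a b p hp => h ⟨a, b, p, hp⟩,
    fun a b p hp => ⟨hp.isMatching_symmDiff hM', fun N hN => ?_⟩⟩
  · by_contra! hab
    obtain ⟨hau, hav, hbu, hbv⟩ := hab
    exact hM.not_isAugPath _ (hp.mapLe_deleteEdges_erase hau hav hbu hbv)
  · rw [hp.card_symmDiff, card_erase_add_one he]
    exact hM.2 N (hN.mono (G.deleteEdges_le _))
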